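/- Let u, v, w, Θ, q be smooth on ℝ² × [0,H] × (0,T), L-periodic in x and y, with ε, σ, Re > 0, satisfying the temperature equation ∂_tΘ + V·∇₃Θ = (σRe)⁻¹ Δ₃Θ + q with V = (u,v,εw), the incompressibility condition u_x + v_y + ε w_z = 0, and the boundary conditions Θ_z = 0 and w = 0 at z = 0 and z = H. Then for every t ∈ (0,T): ½ d/dt ∫_Ω |Θ_z|² dV = −(σRe)⁻¹ ∫_Ω |∇₃Θ_z|² dV + ∫_Ω Θ (u_z Θ_{xz} + v_z Θ_{yz} + ε w_z Θ_{zz}) dV − ∫_Ω Θ_{zz} q dV. -/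

import Mathlib

open MeasureTheory Real

noncomputable section

/-- Partial derivative in the time variable. -/
def pT (f : ℝ → ℝ → ℝ → ℝ → ℝ) : ℝ → ℝ → ℝ → ℝ → ℝ :=
  fun t x y z => deriv (fun s => f s x y z) t
/-- Partial derivative in the x variable. -/
def pX (f : ℝ → ℝ → ℝ → ℝ → ℝ) : ℝ → ℝ → ℝ → ℝ → ℝ :=
  fun t x y z => deriv (fun s => f t s y z) x
/-- Partial derivative in the y variable. -/
def pY (f : ℝ → ℝ → ℝ → ℝ → ℝ) : ℝ → ℝ → ℝ → ℝ → ℝ :=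
  fun t x y z => deriv (fun s => f t x s z) y
/-- Partial derivative in the z variable. -/
def pZ (f : ℝ → ℝ → ℝ → ℝ → ℝ) : ℝ → ℝ → ℝ → ℝ → ℝ :=
  fun t x y z => deriv (fun s => f t x y s) z

/-- The cylinder Ω = [0,L] × [0,L] × [0,H]. -/
def Omega (L H : ℝ) : Set (ℝ × ℝ × ℝ) := Set.Icc 0 L ×ˢ Set.Icc 0 L ×ˢ Set.Icc 0 H

/-- Smoothness (C^∞) of a time-dependent scalar field. -/
def Smooth4 (f : ℝ → ℝ → ℝ → ℝ → ℝ) : Prop :=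
  ContDiff ℝ (⊤ : ℕ∞) (fun q : ℝ × ℝ × ℝ × ℝ => f q.1 q.2.1 q.2.2.1 q.2.2.2)

/-- L-periodicity in the horizontal variables x and y. -/
def PerXY (L : ℝ) (f : ℝ → ℝ → ℝ → ℝ → ℝ) : Prop :=
  ∀ t x y z : ℝ, f t (x + L) y z = f t x y z ∧ f t x (y + L) z = f t x y z

/-- First component of the (spatial) curl of the vector field (f, g, h). -/
def curl1 (f g h : ℝ → ℝ → ℝ → ℝ → ℝ) : ℝ → ℝ → ℝ → ℝ → ℝ :=
  fun t x y z => pY h t x y z - pZ g t x y z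
/-- Second component of the (spatial) curl of the vector field (f, g, h). -/
def curl2 (f g h : ℝ → ℝ → ℝ → ℝ → ℝ) : ℝ → ℝ → ℝ → ℝ → ℝ :=
  fun t x y z => pZ f t x y z - pX h t x y z
/-- Third component of the (spatial) curl of the vector field (f, g, h). -/
def curl3 (f g h : ℝ → ℝ → ℝ → ℝ → ℝ) : ℝ → ℝ → ℝ → ℝ → ℝ :=
  fun t x y z => pX g t x y z - pY f t x y z

/-- Spatial Laplacian Δ₃. -/
def lap (f : ℝ → ℝ → ℝ → ℝ → ℝ) : ℝ → ℝ → ℝ → ℝ → ℝ :=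
  fun t x y z => pX (pX f) t x y z + pY (pY f) t x y z + pZ (pZ f) t x y z

/-- ω₃ = v_x − u_y. -/
def om (u v : ℝ → ℝ → ℝ → ℝ → ℝ) : ℝ → ℝ → ℝ → ℝ → ℝ :=
  fun t x y z => pX v t x y z - pY u t x y z

-- uncurried version
def U4 (f : ℝ → ℝ → ℝ → ℝ → ℝ) : ℝ × ℝ × ℝ × ℝ → ℝ := fun q => f q.1 q.2.1 q.2.2.1 q.2.2.2

abbrev E4 := ℝ × ℝ × ℝ × ℝ

def eT : E4 := (1,0,0,0)
def eX : E4 := (0,1,0,0)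
def eY : E4 := (0,0,1,0)
def eZ : E4 := (0,0,0,1)

lemma smooth4_iff (f) : Smooth4 f ↔ ContDiff ℝ (⊤ : ℕ∞) (U4 f) := Iff.rfl

lemma lineT (t x y z : ℝ) : HasDerivAt (fun s : ℝ => ((s, x, y, z) : E4)) eT t :=
  (hasDerivAt_id t).prodMk ((hasDerivAt_const t _))
lemma lineX (t x y z : ℝ) : HasDerivAt (fun s : ℝ => ((t, s, y, z) : E4)) eX x :=
  (hasDerivAt_const x t).prodMk ((hasDerivAt_id x).prodMk (hasDerivAt_const x _))
lemma lineY (t x y z : ℝ) : HasDerivAt (fun s : ℝ => ((t, x, s, z) : E4)) eY y :=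
  (hasDerivAt_const y t).prodMk ((hasDerivAt_const y x).prodMk ((hasDerivAt_id y).prodMk (hasDerivAt_const y _)))
lemma lineZ (t x y z : ℝ) : HasDerivAt (fun s : ℝ => ((t, x, y, s) : E4)) eZ z :=
  (hasDerivAt_const z t).prodMk ((hasDerivAt_const z x).prodMk ((hasDerivAt_const z y).prodMk (hasDerivAt_id z)))

lemma Smooth4.hasDerivT {f} (hf : Smooth4 f) (t x y z : ℝ) :
    HasDerivAt (fun s => f s x y z) (fderiv ℝ (U4 f) (t,x,y,z) eT) t :=
  ((hf.differentiable (by simp) (t,x,y,z)).hasFDerivAt.comp_hasDerivAt t (lineT t x y z) :)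
lemma Smooth4.hasDerivX {f} (hf : Smooth4 f) (t x y z : ℝ) :
    HasDerivAt (fun s => f t s y z) (fderiv ℝ (U4 f) (t,x,y,z) eX) x :=
  ((hf.differentiable (by simp) (t,x,y,z)).hasFDerivAt.comp_hasDerivAt x (lineX t x y z) :)
lemma Smooth4.hasDerivY {f} (hf : Smooth4 f) (t x y z : ℝ) :
    HasDerivAt (fun s => f t x s z) (fderiv ℝ (U4 f) (t,x,y,z) eY) y :=
  ((hf.differentiable (by simp) (t,x,y,z)).hasFDerivAt.comp_hasDerivAt y (lineY t x y z) :)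
lemma Smooth4.hasDerivZ {f} (hf : Smooth4 f) (t x y z : ℝ) :
    HasDerivAt (fun s => f t x y s) (fderiv ℝ (U4 f) (t,x,y,z) eZ) z :=
  ((hf.differentiable (by simp) (t,x,y,z)).hasFDerivAt.comp_hasDerivAt z (lineZ t x y z) :)

lemma pT_eq {f} (hf : Smooth4 f) (t x y z : ℝ) :
    pT f t x y z = fderiv ℝ (U4 f) (t,x,y,z) eT := (hf.hasDerivT t x y z).deriv
lemma pX_eq {f} (hf : Smooth4 f) (t x y z : ℝ) :
    pX f t x y z = fderiv ℝ (U4 f) (t,x,y,z) eX := (hf.hasDerivX t x y z).deriv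
lemma pY_eq {f} (hf : Smooth4 f) (t x y z : ℝ) :
    pY f t x y z = fderiv ℝ (U4 f) (t,x,y,z) eY := (hf.hasDerivY t x y z).deriv
lemma pZ_eq {f} (hf : Smooth4 f) (t x y z : ℝ) :
    pZ f t x y z = fderiv ℝ (U4 f) (t,x,y,z) eZ := (hf.hasDerivZ t x y z).deriv

lemma contDiff_fderiv_apply {f} (hf : Smooth4 f) (v : E4) :
    ContDiff ℝ (⊤ : ℕ∞) (fun q => fderiv ℝ (U4 f) q v) :=
  (hf.fderiv_right (by simp)).clm_apply contDiff_const

lemma Smooth4.pT {f} (hf : Smooth4 f) : Smooth4 (_root_.pT f) := by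
  have : U4 (_root_.pT f) = fun q => fderiv ℝ (U4 f) q eT := by
    funext q; exact pT_eq hf q.1 q.2.1 q.2.2.1 q.2.2.2
  rw [smooth4_iff, this]; exact contDiff_fderiv_apply hf eT
lemma Smooth4.pX {f} (hf : Smooth4 f) : Smooth4 (_root_.pX f) := by
  have : U4 (_root_.pX f) = fun q => fderiv ℝ (U4 f) q eX := by
    funext q; exact pX_eq hf q.1 q.2.1 q.2.2.1 q.2.2.2
  rw [smooth4_iff, this]; exact contDiff_fderiv_apply hf eX
lemma Smooth4.pY {f} (hf : Smooth4 f) : Smooth4 (_root_.pY f) := by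
  have : U4 (_root_.pY f) = fun q => fderiv ℝ (U4 f) q eY := by
    funext q; exact pY_eq hf q.1 q.2.1 q.2.2.1 q.2.2.2
  rw [smooth4_iff, this]; exact contDiff_fderiv_apply hf eY
lemma Smooth4.pZ {f} (hf : Smooth4 f) : Smooth4 (_root_.pZ f) := by
  have : U4 (_root_.pZ f) = fun q => fderiv ℝ (U4 f) q eZ := by
    funext q; exact pZ_eq hf q.1 q.2.1 q.2.2.1 q.2.2.2
  rw [smooth4_iff, this]; exact contDiff_fderiv_apply hf eZ

-- symmetry of second derivatives
lemma second_comm {g : E4 → ℝ} (hg : ContDiff ℝ (⊤ : ℕ∞) g) (x v w : E4) :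
    fderiv ℝ (fun q => fderiv ℝ g q w) x v = fderiv ℝ (fun q => fderiv ℝ g q v) x w := by
  have hdf : Differentiable ℝ (fderiv ℝ g) := (hg.fderiv_right (m := 1) (WithTop.coe_le_coe.mpr le_top)).differentiable one_ne_zero
  have hsym := second_derivative_symmetric
    (f := g) (f' := fderiv ℝ g) (f'' := fderiv ℝ (fderiv ℝ g) x)
    (fun y => (hg.differentiable (by simp) y).hasFDerivAt) (hdf x).hasFDerivAt v w
  have h1 : ∀ u : E4, fderiv ℝ (fun q => fderiv ℝ g q w) x u
      = fderiv ℝ (fderiv ℝ g) x u w := by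
    intro u
    rw [fderiv_clm_apply (hdf x) (differentiableAt_const w)]
    simp
  have h2 : ∀ u : E4, fderiv ℝ (fun q => fderiv ℝ g q v) x u
      = fderiv ℝ (fderiv ℝ g) x u v := by
    intro u
    rw [fderiv_clm_apply (hdf x) (differentiableAt_const v)]
    simp
  rw [h1, h2]; exact hsym

-- commutation lemmas
lemma pZ_pX_comm {f} (hf : Smooth4 f) : pZ (pX f) = pX (pZ f) := by
  funext t x y z
  have hX : U4 (pX f) = fun q => fderiv ℝ (U4 f) q eX := by
    funext q; exact pX_eq hf q.1 q.2.1 q.2.2.1 q.2.2.2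
  have hZ : U4 (pZ f) = fun q => fderiv ℝ (U4 f) q eZ := by
    funext q; exact pZ_eq hf q.1 q.2.1 q.2.2.1 q.2.2.2
  rw [pZ_eq hf.pX, pX_eq hf.pZ, hX, hZ]
  exact second_comm hf (t,x,y,z) eZ eX

lemma pZ_pY_comm {f} (hf : Smooth4 f) : pZ (pY f) = pY (pZ f) := by
  funext t x y z
  have hY : U4 (pY f) = fun q => fderiv ℝ (U4 f) q eY := by
    funext q; exact pY_eq hf q.1 q.2.1 q.2.2.1 q.2.2.2
  have hZ : U4 (pZ f) = fun q => fderiv ℝ (U4 f) q eZ := by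
    funext q; exact pZ_eq hf q.1 q.2.1 q.2.2.1 q.2.2.2
  rw [pZ_eq hf.pY, pY_eq hf.pZ, hY, hZ]
  exact second_comm hf (t,x,y,z) eZ eY

lemma pZ_pT_comm {f} (hf : Smooth4 f) : pZ (pT f) = pT (pZ f) := by
  funext t x y z
  have hT : U4 (pT f) = fun q => fderiv ℝ (U4 f) q eT := by
    funext q; exact pT_eq hf q.1 q.2.1 q.2.2.1 q.2.2.2
  have hZ : U4 (pZ f) = fun q => fderiv ℝ (U4 f) q eZ := by
    funext q; exact pZ_eq hf q.1 q.2.1 q.2.2.1 q.2.2.2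
  rw [pZ_eq hf.pT, pT_eq hf.pZ, hT, hZ]
  exact second_comm hf (t,x,y,z) eZ eT

-- continuity of spatial slice at fixed time
lemma Smooth4.cont {f} (hf : Smooth4 f) : Continuous (U4 f) := hf.continuous

lemma Smooth4.contSlice {f} (hf : Smooth4 f) (t : ℝ) :
    Continuous (fun p : ℝ × ℝ × ℝ => f t p.1 p.2.1 p.2.2) := by
  have : (fun p : ℝ × ℝ × ℝ => f t p.1 p.2.1 p.2.2)
      = (U4 f) ∘ (fun p : ℝ × ℝ × ℝ => (t, p)) := rfl
  rw [this]; exact hf.cont.comp (continuous_const.prodMk continuous_id)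

lemma PerXY.pT {L f} (hp : PerXY L f) : PerXY L (_root_.pT f) := by
  intro t x y z
  constructor <;> · unfold _root_.pT; congr 1; funext s; simp [(hp s _ _ _).1, (hp s _ _ _).2]

lemma PerXY.pZ {L f} (hp : PerXY L f) : PerXY L (_root_.pZ f) := by
  intro t x y z
  constructor <;> · unfold _root_.pZ; congr 1; funext s; simp [(hp _ _ _ s).1, (hp _ _ _ s).2]

lemma PerXY.pX {L f} (hp : PerXY L f) : PerXY L (_root_.pX f) := by
  intro t x y z
  constructor
  · show deriv (fun s => f t s y z) (x + L) = _
    rw [← deriv_comp_add_const (fun s => f t s y z) L]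
    unfold _root_.pX; congr 1; funext s; exact (hp t s y z).1
  · unfold _root_.pX; congr 1; funext s; exact (hp t s y z).2

lemma PerXY.pY {L f} (hp : PerXY L f) : PerXY L (_root_.pY f) := by
  intro t x y z
  constructor
  · unfold _root_.pY; congr 1; funext s; exact (hp t x s z).1
  · show deriv (fun s => f t x s z) (y + L) = _
    rw [← deriv_comp_add_const (fun s => f t x s z) L]
    unfold _root_.pY; congr 1; funext s; exact (hp t x s z).2

lemma isCompact_Omega (L H : ℝ) : IsCompact (Omega L H) :=
  isCompact_Icc.prod (isCompact_Icc.prod isCompact_Icc)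

lemma integrableOn_Omega {f : ℝ × ℝ × ℝ → ℝ} (hf : Continuous f) (L H : ℝ) :
    IntegrableOn f (Omega L H) :=
  hf.continuousOn.integrableOn_compact (isCompact_Omega L H)

lemma setIntegral_Icc_eq_intervalIntegral {a b : ℝ} (hab : a ≤ b) (g : ℝ → ℝ) :
    ∫ x in Set.Icc a b, g x = ∫ x in a..b, g x := by
  rw [MeasureTheory.integral_Icc_eq_integral_Ioc, intervalIntegral.integral_of_le hab]

lemma integral_Omega_eq {L H : ℝ} (hL : 0 ≤ L) (hH : 0 ≤ H) {f : ℝ × ℝ × ℝ → ℝ}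
    (hf : Continuous f) :
    ∫ p in Omega L H, f p
      = ∫ x in (0:ℝ)..L, ∫ y in (0:ℝ)..L, ∫ z in (0:ℝ)..H, f (x, y, z) := by
  have hint : IntegrableOn f (Omega L H) := integrableOn_Omega hf L H
  have h1 : ∫ p in Omega L H, f p
      = ∫ x in Set.Icc (0:ℝ) L, ∫ p in Set.Icc (0:ℝ) L ×ˢ Set.Icc (0:ℝ) H, f (x, p) :=
    setIntegral_prod f hint
  rw [h1, setIntegral_Icc_eq_intervalIntegral hL]
  apply intervalIntegral.integral_congr
  intro x _
  beta_reduce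
  have hx : Continuous (fun p : ℝ × ℝ => f (x, p)) :=
    hf.comp (continuous_const.prodMk continuous_id)
  have h2 : ∫ p in Set.Icc (0:ℝ) L ×ˢ Set.Icc (0:ℝ) H, f (x, p)
      = ∫ y in Set.Icc (0:ℝ) L, ∫ z in Set.Icc (0:ℝ) H, f (x, y, z) :=
    setIntegral_prod _ (hx.continuousOn.integrableOn_compact (isCompact_Icc.prod isCompact_Icc))
  rw [h2, setIntegral_Icc_eq_intervalIntegral hL]
  apply intervalIntegral.integral_congr
  intro y _
  beta_reduce
  rw [setIntegral_Icc_eq_intervalIntegral hH]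

lemma intervalIntegral_swap {a b c d : ℝ} (hab : a ≤ b) (hcd : c ≤ d) {g : ℝ → ℝ → ℝ}
    (hg : Continuous fun p : ℝ × ℝ => g p.1 p.2) :
    ∫ x in a..b, ∫ y in c..d, g x y = ∫ y in c..d, ∫ x in a..b, g x y := by
  have hi : Integrable (Function.uncurry g)
      ((volume.restrict (Set.Ioc a b)).prod (volume.restrict (Set.Ioc c d))) := by
    rw [Measure.prod_restrict]
    exact (hg.continuousOn.integrableOn_compact
      (isCompact_Icc.prod isCompact_Icc)).mono_set
      (Set.prod_mono Set.Ioc_subset_Icc_self Set.Ioc_subset_Icc_self)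
  have hswap := MeasureTheory.integral_integral_swap hi
  calc ∫ x in a..b, ∫ y in c..d, g x y
      = ∫ x in Set.Ioc a b, ∫ y in Set.Ioc c d, g x y := by
        rw [intervalIntegral.integral_of_le hab]
        refine setIntegral_congr_fun measurableSet_Ioc fun x _ => ?_
        rw [intervalIntegral.integral_of_le hcd]
    _ = ∫ y in Set.Ioc c d, ∫ x in Set.Ioc a b, g x y := hswap
    _ = ∫ y in c..d, ∫ x in a..b, g x y := by
        rw [intervalIntegral.integral_of_le hcd]
        refine setIntegral_congr_fun measurableSet_Ioc fun y _ => ?_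
        rw [intervalIntegral.integral_of_le hab]

lemma integral_Omega_eq_y_inner {L H : ℝ} (hL : 0 ≤ L) (hH : 0 ≤ H) {f : ℝ × ℝ × ℝ → ℝ}
    (hf : Continuous f) :
    ∫ p in Omega L H, f p
      = ∫ x in (0:ℝ)..L, ∫ z in (0:ℝ)..H, ∫ y in (0:ℝ)..L, f (x, y, z) := by
  rw [integral_Omega_eq hL hH hf]
  refine intervalIntegral.integral_congr fun x _ => ?_
  beta_reduce
  exact intervalIntegral_swap hL hH
    (g := fun y z => f (x, y, z)) (hf.comp (continuous_const.prodMk continuous_id))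

lemma integral_Omega_eq_x_inner {L H : ℝ} (hL : 0 ≤ L) (hH : 0 ≤ H) {f : ℝ × ℝ × ℝ → ℝ}
    (hf : Continuous f) :
    ∫ p in Omega L H, f p
      = ∫ y in (0:ℝ)..L, ∫ z in (0:ℝ)..H, ∫ x in (0:ℝ)..L, f (x, y, z) := by
  rw [integral_Omega_eq hL hH hf]
  have hcont : Continuous fun p : ℝ × ℝ => ∫ z in (0:ℝ)..H, f (p.1, p.2, z) := by
    apply intervalIntegral.continuous_parametric_intervalIntegral_of_continuous'
    exact hf.comp ((continuous_fst.fst).prodMk ((continuous_fst.snd).prodMk continuous_snd))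
  have h1 := intervalIntegral_swap hL hL
    (g := fun x y => ∫ z in (0:ℝ)..H, f (x, y, z)) hcont
  rw [h1]
  refine intervalIntegral.integral_congr fun y _ => ?_
  beta_reduce
  exact intervalIntegral_swap hL hH (g := fun x z => f (x, y, z))
    (hf.comp (continuous_fst.prodMk (continuous_const.prodMk continuous_snd)))

lemma hasDerivAt_integral_Omega {L H : ℝ} {G G' : ℝ → ℝ × ℝ × ℝ → ℝ} (t : ℝ)
    (hG : Continuous fun q : ℝ × (ℝ × ℝ × ℝ) => G q.1 q.2)
    (hG' : Continuous fun q : ℝ × (ℝ × ℝ × ℝ) => G' q.1 q.2)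
    (hd : ∀ s p, HasDerivAt (fun r => G r p) (G' s p) s) :
    HasDerivAt (fun s => ∫ p in Omega L H, G s p) (∫ p in Omega L H, G' t p) t := by
  set μ := volume.restrict (Omega L H)
  have hmeas : MeasurableSet (Omega L H) := (isCompact_Omega L H).isClosed.measurableSet
  have hK : IsCompact (Set.Icc (t - 1) (t + 1) ×ˢ Omega L H) :=
    isCompact_Icc.prod (isCompact_Omega L H)
  obtain ⟨C, hC⟩ := hK.exists_bound_of_continuousOn hG'.continuousOn
  have hslice : ∀ s, Continuous fun p => G s p := fun s =>
    hG.comp (continuous_const.prodMk continuous_id)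
  have hslice' : ∀ s, Continuous fun p => G' s p := fun s =>
    hG'.comp (continuous_const.prodMk continuous_id)
  have key := hasDerivAt_integral_of_dominated_loc_of_deriv_le (μ := μ)
    (F := G) (F' := G') (bound := fun _ => C) (x₀ := t) (s := Metric.ball t 1) (Metric.ball_mem_nhds t one_pos)
    (Filter.Eventually.of_forall fun s => (hslice s).aestronglyMeasurable)
    (((hslice t).continuousOn.integrableOn_compact (isCompact_Omega L H)))
    ((hslice' t).aestronglyMeasurable)
    ?_ ?_ ?_
  · exact key.2
  · refine (ae_restrict_iff' hmeas).2 (Filter.Eventually.of_forall fun p hp => fun s hs => ?_)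
    exact hC (s, p) ⟨by
      simp only [Metric.mem_ball, Real.dist_eq] at hs
      constructor <;> [linarith [abs_le.1 hs.le |>.1]; linarith [abs_le.1 hs.le |>.2]], hp⟩
  · exact integrableOn_const (isCompact_Omega L H).measure_lt_top.ne
  · exact Filter.Eventually.of_forall fun p => fun s _ => hd s p

-- primed hasDeriv lemmas with pD derivatives
lemma Smooth4.hdT {f} (hf : Smooth4 f) (t x y z : ℝ) :
    HasDerivAt (fun s => f s x y z) (_root_.pT f t x y z) t := by
  rw [pT_eq hf]; exact hf.hasDerivT t x y z
lemma Smooth4.hdX {f} (hf : Smooth4 f) (t x y z : ℝ) :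
    HasDerivAt (fun s => f t s y z) (_root_.pX f t x y z) x := by
  rw [pX_eq hf]; exact hf.hasDerivX t x y z
lemma Smooth4.hdY {f} (hf : Smooth4 f) (t x y z : ℝ) :
    HasDerivAt (fun s => f t x s z) (_root_.pY f t x y z) y := by
  rw [pY_eq hf]; exact hf.hasDerivY t x y z
lemma Smooth4.hdZ {f} (hf : Smooth4 f) (t x y z : ℝ) :
    HasDerivAt (fun s => f t x y s) (_root_.pZ f t x y z) z := by
  rw [pZ_eq hf]; exact hf.hasDerivZ t x y z

-- algebra closure
lemma Smooth4.mul {f g} (hf : Smooth4 f) (hg : Smooth4 g) :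
    Smooth4 (fun t x y z => f t x y z * g t x y z) := ContDiff.mul hf hg
lemma Smooth4.add {f g} (hf : Smooth4 f) (hg : Smooth4 g) :
    Smooth4 (fun t x y z => f t x y z + g t x y z) := ContDiff.add hf hg

lemma PerXY.mul {L f g} (hf : PerXY L f) (hg : PerXY L g) :
    PerXY L (fun t x y z => f t x y z * g t x y z) := by
  intro t x y z
  exact ⟨by simp only [(hf t x y z).1, (hg t x y z).1], by simp only [(hf t x y z).2, (hg t x y z).2]⟩

-- product rules
lemma pX_mul {f g} (hf : Smooth4 f) (hg : Smooth4 g) (t x y z : ℝ) :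
    pX (fun t x y z => f t x y z * g t x y z) t x y z
      = pX f t x y z * g t x y z + f t x y z * pX g t x y z :=
  ((hf.hdX t x y z).mul (hg.hdX t x y z)).deriv
lemma pY_mul {f g} (hf : Smooth4 f) (hg : Smooth4 g) (t x y z : ℝ) :
    pY (fun t x y z => f t x y z * g t x y z) t x y z
      = pY f t x y z * g t x y z + f t x y z * pY g t x y z :=
  ((hf.hdY t x y z).mul (hg.hdY t x y z)).deriv
lemma pZ_mul {f g} (hf : Smooth4 f) (hg : Smooth4 g) (t x y z : ℝ) :
    pZ (fun t x y z => f t x y z * g t x y z) t x y z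
      = pZ f t x y z * g t x y z + f t x y z * pZ g t x y z :=
  ((hf.hdZ t x y z).mul (hg.hdZ t x y z)).deriv

-- continuity of coordinate slices
lemma Smooth4.contX {f} (hf : Smooth4 f) (t y z : ℝ) : Continuous fun x => f t x y z := by
  have h : (fun x => f t x y z) = (U4 f) ∘ (fun x : ℝ => (t, x, y, z)) := rfl
  rw [h]; exact hf.cont.comp (by fun_prop)
lemma Smooth4.contY {f} (hf : Smooth4 f) (t x z : ℝ) : Continuous fun y => f t x y z := by
  have h : (fun y => f t x y z) = (U4 f) ∘ (fun y : ℝ => (t, x, y, z)) := rfl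
  rw [h]; exact hf.cont.comp (by fun_prop)
lemma Smooth4.contZ {f} (hf : Smooth4 f) (t x y : ℝ) : Continuous fun z => f t x y z := by
  have h : (fun z => f t x y z) = (U4 f) ∘ (fun z : ℝ => (t, x, y, z)) := rfl
  rw [h]; exact hf.cont.comp (by fun_prop)

-- 1-D integration by parts, x-direction, periodic
lemma ibp_x_1d {L : ℝ} {F G : ℝ → ℝ → ℝ → ℝ → ℝ}
    (hF : Smooth4 F) (hG : Smooth4 G) (hFp : PerXY L F) (hGp : PerXY L G)
    (t y z : ℝ) :
    ∫ x in (0:ℝ)..L, F t x y z * pX G t x y z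
      = - ∫ x in (0:ℝ)..L, pX F t x y z * G t x y z := by
  have h := intervalIntegral.integral_mul_deriv_eq_deriv_mul
    (a := (0:ℝ)) (b := L)
    (u := fun x => F t x y z) (v := fun x => G t x y z)
    (u' := fun x => pX F t x y z) (v' := fun x => pX G t x y z)
    (fun x _ => hF.hdX t x y z) (fun x _ => hG.hdX t x y z)
    (((hF.pX).contX t y z).intervalIntegrable 0 L)
    (((hG.pX).contX t y z).intervalIntegrable 0 L)
  have hFL : F t L y z = F t 0 y z := by simpa using (hFp t 0 y z).1
  have hGL : G t L y z = G t 0 y z := by simpa using (hGp t 0 y z).1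
  rw [h]; beta_reduce; rw [hFL, hGL]; ring

lemma ibp_y_1d {L : ℝ} {F G : ℝ → ℝ → ℝ → ℝ → ℝ}
    (hF : Smooth4 F) (hG : Smooth4 G) (hFp : PerXY L F) (hGp : PerXY L G)
    (t x z : ℝ) :
    ∫ y in (0:ℝ)..L, F t x y z * pY G t x y z
      = - ∫ y in (0:ℝ)..L, pY F t x y z * G t x y z := by
  have h := intervalIntegral.integral_mul_deriv_eq_deriv_mul
    (a := (0:ℝ)) (b := L)
    (u := fun y => F t x y z) (v := fun y => G t x y z)
    (u' := fun y => pY F t x y z) (v' := fun y => pY G t x y z)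
    (fun y _ => hF.hdY t x y z) (fun y _ => hG.hdY t x y z)
    (((hF.pY).contY t x z).intervalIntegrable 0 L)
    (((hG.pY).contY t x z).intervalIntegrable 0 L)
  have hFL : F t x L z = F t x 0 z := by simpa using (hFp t x 0 z).2
  have hGL : G t x L z = G t x 0 z := by simpa using (hGp t x 0 z).2
  rw [h]; beta_reduce; rw [hFL, hGL]; ring

lemma ibp_z_1d {H : ℝ} {F G : ℝ → ℝ → ℝ → ℝ → ℝ}
    (hF : Smooth4 F) (hG : Smooth4 G) (t x y : ℝ)
    (hb : F t x y H * G t x y H = 0) (hb0 : F t x y 0 * G t x y 0 = 0) :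
    ∫ z in (0:ℝ)..H, F t x y z * pZ G t x y z
      = - ∫ z in (0:ℝ)..H, pZ F t x y z * G t x y z := by
  have h := intervalIntegral.integral_mul_deriv_eq_deriv_mul
    (a := (0:ℝ)) (b := H)
    (u := fun z => F t x y z) (v := fun z => G t x y z)
    (u' := fun z => pZ F t x y z) (v' := fun z => pZ G t x y z)
    (fun z _ => hF.hdZ t x y z) (fun z _ => hG.hdZ t x y z)
    (((hF.pZ).contZ t x y).intervalIntegrable 0 H)
    (((hG.pZ).contZ t x y).intervalIntegrable 0 H)
  rw [h]; beta_reduce; rw [hb, hb0]; ring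

lemma ibp_x_Omega {L H : ℝ} (hL : 0 ≤ L) (hH : 0 ≤ H) {F G : ℝ → ℝ → ℝ → ℝ → ℝ}
    (hF : Smooth4 F) (hG : Smooth4 G) (hFp : PerXY L F) (hGp : PerXY L G) (t : ℝ) :
    ∫ p in Omega L H, F t p.1 p.2.1 p.2.2 * pX G t p.1 p.2.1 p.2.2
      = - ∫ p in Omega L H, pX F t p.1 p.2.1 p.2.2 * G t p.1 p.2.1 p.2.2 := by
  have c1 : Continuous fun p : ℝ × ℝ × ℝ => F t p.1 p.2.1 p.2.2 * pX G t p.1 p.2.1 p.2.2 :=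
    (hF.contSlice t).mul ((hG.pX).contSlice t)
  have c2 : Continuous fun p : ℝ × ℝ × ℝ => pX F t p.1 p.2.1 p.2.2 * G t p.1 p.2.1 p.2.2 :=
    ((hF.pX).contSlice t).mul (hG.contSlice t)
  rw [integral_Omega_eq_x_inner hL hH c1, integral_Omega_eq_x_inner hL hH c2,
      ← intervalIntegral.integral_neg]
  refine intervalIntegral.integral_congr fun y _ => ?_
  beta_reduce
  rw [← intervalIntegral.integral_neg]
  refine intervalIntegral.integral_congr fun z _ => ?_
  beta_reduce
  exact ibp_x_1d hF hG hFp hGp t y z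

lemma ibp_y_Omega {L H : ℝ} (hL : 0 ≤ L) (hH : 0 ≤ H) {F G : ℝ → ℝ → ℝ → ℝ → ℝ}
    (hF : Smooth4 F) (hG : Smooth4 G) (hFp : PerXY L F) (hGp : PerXY L G) (t : ℝ) :
    ∫ p in Omega L H, F t p.1 p.2.1 p.2.2 * pY G t p.1 p.2.1 p.2.2
      = - ∫ p in Omega L H, pY F t p.1 p.2.1 p.2.2 * G t p.1 p.2.1 p.2.2 := by
  have c1 : Continuous fun p : ℝ × ℝ × ℝ => F t p.1 p.2.1 p.2.2 * pY G t p.1 p.2.1 p.2.2 :=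
    (hF.contSlice t).mul ((hG.pY).contSlice t)
  have c2 : Continuous fun p : ℝ × ℝ × ℝ => pY F t p.1 p.2.1 p.2.2 * G t p.1 p.2.1 p.2.2 :=
    ((hF.pY).contSlice t).mul (hG.contSlice t)
  rw [integral_Omega_eq_y_inner hL hH c1, integral_Omega_eq_y_inner hL hH c2,
      ← intervalIntegral.integral_neg]
  refine intervalIntegral.integral_congr fun x _ => ?_
  beta_reduce
  rw [← intervalIntegral.integral_neg]
  refine intervalIntegral.integral_congr fun z _ => ?_
  beta_reduce
  exact ibp_y_1d hF hG hFp hGp t x z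

lemma ibp_z_Omega {L H : ℝ} (hL : 0 ≤ L) (hH : 0 ≤ H) {F G : ℝ → ℝ → ℝ → ℝ → ℝ}
    (hF : Smooth4 F) (hG : Smooth4 G) (t : ℝ)
    (hb : ∀ x y, F t x y H * G t x y H = 0 ∧ F t x y 0 * G t x y 0 = 0) :
    ∫ p in Omega L H, F t p.1 p.2.1 p.2.2 * pZ G t p.1 p.2.1 p.2.2
      = - ∫ p in Omega L H, pZ F t p.1 p.2.1 p.2.2 * G t p.1 p.2.1 p.2.2 := by
  have c1 : Continuous fun p : ℝ × ℝ × ℝ => F t p.1 p.2.1 p.2.2 * pZ G t p.1 p.2.1 p.2.2 :=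
    (hF.contSlice t).mul ((hG.pZ).contSlice t)
  have c2 : Continuous fun p : ℝ × ℝ × ℝ => pZ F t p.1 p.2.1 p.2.2 * G t p.1 p.2.1 p.2.2 :=
    ((hF.pZ).contSlice t).mul (hG.contSlice t)
  rw [integral_Omega_eq hL hH c1, integral_Omega_eq hL hH c2,
      ← intervalIntegral.integral_neg]
  refine intervalIntegral.integral_congr fun x _ => ?_
  beta_reduce
  rw [← intervalIntegral.integral_neg]
  refine intervalIntegral.integral_congr fun y _ => ?_
  beta_reduce
  exact ibp_z_1d hF hG t x y (hb x y).1 (hb x y).2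
lemma Icongr {S : Set (ℝ × ℝ × ℝ)} {f g : ℝ × ℝ × ℝ → ℝ} (h : ∀ p, f p = g p) :
    ∫ p in S, f p = ∫ p in S, g p := by rw [funext h]

lemma I2add {L H : ℝ} {f g : ℝ × ℝ × ℝ → ℝ} (hf : Continuous f) (hg : Continuous g) :
    ∫ p in Omega L H, (f p + g p)
      = (∫ p in Omega L H, f p) + ∫ p in Omega L H, g p :=
  integral_add (integrableOn_Omega hf L H) (integrableOn_Omega hg L H)

lemma Icmul {L H : ℝ} (c : ℝ) (f : ℝ × ℝ × ℝ → ℝ) :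
    ∫ p in Omega L H, c * f p = c * ∫ p in Omega L H, f p :=
  integral_const_mul c f

lemma I3add {L H c3 : ℝ} {f1 f2 f3 : ℝ × ℝ × ℝ → ℝ}
    (h1 : Continuous f1) (h2 : Continuous f2) (h3 : Continuous f3) :
    ∫ p in Omega L H, (f1 p + f2 p + c3 * f3 p)
      = (∫ p in Omega L H, f1 p) + (∫ p in Omega L H, f2 p)
        + c3 * ∫ p in Omega L H, f3 p := by
  have e1 : ∫ p in Omega L H, (f1 p + f2 p + c3 * f3 p)
      = (∫ p in Omega L H, (f1 p + f2 p)) + ∫ p in Omega L H, c3 * f3 p :=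
    I2add (h1.add h2) (continuous_const.mul h3)
  rw [e1, I2add h1 h2, Icmul]

lemma Isplit6 {L H c : ℝ} {f1 f2 f3 f4 f5 f6 : ℝ × ℝ × ℝ → ℝ}
    (h1 : Continuous f1) (h2 : Continuous f2) (h3 : Continuous f3)
    (h4 : Continuous f4) (h5 : Continuous f5) (h6 : Continuous f6) :
    ∫ p in Omega L H, (c * f1 p + c * f2 p + c * f3 p + f4 p - f5 p - f6 p)
      = c * (∫ p in Omega L H, f1 p) + c * (∫ p in Omega L H, f2 p)
        + c * (∫ p in Omega L H, f3 p) + (∫ p in Omega L H, f4 p)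
        - (∫ p in Omega L H, f5 p) - ∫ p in Omega L H, f6 p := by
  have c123 : Continuous fun p => c * f1 p + c * f2 p + c * f3 p :=
    ((continuous_const.mul h1).add (continuous_const.mul h2)).add (continuous_const.mul h3)
  have e0 : ∫ p in Omega L H, (c * f1 p + c * f2 p + c * f3 p + f4 p - f5 p - f6 p)
      = (∫ p in Omega L H, (c * f1 p + c * f2 p + c * f3 p + f4 p - f5 p))
        - ∫ p in Omega L H, f6 p :=
    integral_sub (integrableOn_Omega ((c123.add h4).sub h5) L H) (integrableOn_Omega h6 L H)
  have e1 : ∫ p in Omega L H, (c * f1 p + c * f2 p + c * f3 p + f4 p - f5 p)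
      = (∫ p in Omega L H, (c * f1 p + c * f2 p + c * f3 p + f4 p))
        - ∫ p in Omega L H, f5 p :=
    integral_sub (integrableOn_Omega (c123.add h4) L H) (integrableOn_Omega h5 L H)
  have e2 : ∫ p in Omega L H, (c * f1 p + c * f2 p + c * f3 p + f4 p)
      = (∫ p in Omega L H, (c * f1 p + c * f2 p + c * f3 p))
        + ∫ p in Omega L H, f4 p :=
    I2add c123 h4
  have e3 : ∫ p in Omega L H, (c * f1 p + c * f2 p + c * f3 p)
      = (∫ p in Omega L H, (c * f1 p + c * f2 p)) + ∫ p in Omega L H, c * f3 p :=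
    I2add ((continuous_const.mul h1).add (continuous_const.mul h2)) (continuous_const.mul h3)
  have e4 : ∫ p in Omega L H, (c * f1 p + c * f2 p)
      = (∫ p in Omega L H, c * f1 p) + ∫ p in Omega L H, c * f2 p :=
    I2add (continuous_const.mul h1) (continuous_const.mul h2)
  rw [e0, e1, e2, e3, e4, Icmul, Icmul, Icmul]

lemma Izero {L H : ℝ} {f : ℝ × ℝ × ℝ → ℝ} (h : ∀ p, f p = 0) :
    ∫ p in Omega L H, f p = 0 := by
  rw [funext h]; exact integral_zero _ _

/-- Identity (newtemp4): evolution of ∫|Θ_z|² dV for the temperature field of the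
hydrostatic primitive equations. -/
theorem temperature_gradient_evolution (L H T ε σ Re : ℝ)
    (hL : 0 < L) (hH : 0 < H) (hT : 0 < T) (hε : 0 < ε) (hσ : 0 < σ) (hRe : 0 < Re)
    (u v w Θ q : ℝ → ℝ → ℝ → ℝ → ℝ)
    (hu : Smooth4 u) (hv : Smooth4 v) (hw : Smooth4 w) (hΘ : Smooth4 Θ) (hq : Smooth4 q)
    (hup : PerXY L u) (hvp : PerXY L v) (hwp : PerXY L w) (hΘp : PerXY L Θ) (hqp : PerXY L q)
    (heat : ∀ t ∈ Set.Ioo (0:ℝ) T, ∀ x y z : ℝ,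
      pT Θ t x y z + (u t x y z * pX Θ t x y z + v t x y z * pY Θ t x y z
          + ε * w t x y z * pZ Θ t x y z)
        = (σ * Re)⁻¹ * lap Θ t x y z + q t x y z)
    (hdiv : ∀ t ∈ Set.Ioo (0:ℝ) T, ∀ x y z : ℝ,
      pX u t x y z + pY v t x y z + ε * pZ w t x y z = 0)
    (hbc : ∀ t ∈ Set.Ioo (0:ℝ) T, ∀ x y : ℝ,
      pZ Θ t x y 0 = 0 ∧ pZ Θ t x y H = 0 ∧ w t x y 0 = 0 ∧ w t x y H = 0) :
    ∀ t ∈ Set.Ioo (0:ℝ) T,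
      (1/2) * deriv (fun s => ∫ p in Omega L H, (pZ Θ s p.1 p.2.1 p.2.2)^2) t
        = -((σ * Re)⁻¹ *
            ∫ p in Omega L H,
              (pX (pZ Θ) t p.1 p.2.1 p.2.2)^2 + (pY (pZ Θ) t p.1 p.2.1 p.2.2)^2
              + (pZ (pZ Θ) t p.1 p.2.1 p.2.2)^2)
          + (∫ p in Omega L H,
              Θ t p.1 p.2.1 p.2.2 *
                (pZ u t p.1 p.2.1 p.2.2 * pX (pZ Θ) t p.1 p.2.1 p.2.2
                 + pZ v t p.1 p.2.1 p.2.2 * pY (pZ Θ) t p.1 p.2.1 p.2.2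
                 + ε * pZ w t p.1 p.2.1 p.2.2 * pZ (pZ Θ) t p.1 p.2.1 p.2.2))
          - ∫ p in Omega L H, pZ (pZ Θ) t p.1 p.2.1 p.2.2 * q t p.1 p.2.1 p.2.2 := by
  intro t ht
  have hA : Smooth4 (pZ Θ) := hΘ.pZ
  have hAp : PerXY L (pZ Θ) := hΘp.pZ
  -- Step A : differentiation under the integral sign
  have hder : HasDerivAt (fun s => ∫ p in Omega L H, (pZ Θ s p.1 p.2.1 p.2.2)^2)
      (∫ p in Omega L H,
        2 * (pZ Θ t p.1 p.2.1 p.2.2 * pT (pZ Θ) t p.1 p.2.1 p.2.2)) t := by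
    apply hasDerivAt_integral_Omega t
    · exact hA.cont.pow 2
    · exact (continuous_const.mul (hA.cont.mul (hA.pT).cont))
    · intro s p
      have h := (hA.hdT s p.1 p.2.1 p.2.2).pow 2
      simp [pow_one, mul_assoc] at h
      exact h
  have hderiv : deriv (fun s => ∫ p in Omega L H, (pZ Θ s p.1 p.2.1 p.2.2)^2) t
      = 2 * ∫ p in Omega L H, pZ Θ t p.1 p.2.1 p.2.2 * pT (pZ Θ) t p.1 p.2.1 p.2.2 := by
    rw [hder.deriv]
    exact integral_const_mul 2 _
  rw [hderiv]
  -- Step B : pointwise evolution equation for pZ Θ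
  have hpt : ∀ x y z : ℝ, pT (pZ Θ) t x y z =
      (σ*Re)⁻¹ * (pX (pX (pZ Θ)) t x y z + pY (pY (pZ Θ)) t x y z + pZ (pZ (pZ Θ)) t x y z)
      + pZ q t x y z
      - (pZ u t x y z * pX Θ t x y z + u t x y z * pX (pZ Θ) t x y z
         + pZ v t x y z * pY Θ t x y z + v t x y z * pY (pZ Θ) t x y z
         + ε * pZ w t x y z * pZ Θ t x y z + ε * w t x y z * pZ (pZ Θ) t x y z) := by
    intro x y z
    have hcm : pT (pZ Θ) t x y z = pZ (pT Θ) t x y z := by rw [pZ_pT_comm hΘ]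
    rw [hcm]
    have hsl : (fun s => pT Θ t x y s) = (fun s =>
        (σ*Re)⁻¹ * (pX (pX Θ) t x y s + pY (pY Θ) t x y s + pZ (pZ Θ) t x y s) + q t x y s
        - (u t x y s * pX Θ t x y s + v t x y s * pY Θ t x y s
           + ε * w t x y s * pZ Θ t x y s)) := by
      funext s
      have h := heat t ht x y s
      simp only [lap] at h
      linarith
    have hR : HasDerivAt (fun s =>
        (σ*Re)⁻¹ * (pX (pX Θ) t x y s + pY (pY Θ) t x y s + pZ (pZ Θ) t x y s) + q t x y s
        - (u t x y s * pX Θ t x y s + v t x y s * pY Θ t x y s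
           + ε * w t x y s * pZ Θ t x y s))
        ((σ*Re)⁻¹ * (pZ (pX (pX Θ)) t x y z + pZ (pY (pY Θ)) t x y z
            + pZ (pZ (pZ Θ)) t x y z)
          + pZ q t x y z
          - ((pZ u t x y z * pX Θ t x y z + u t x y z * pZ (pX Θ) t x y z)
            + (pZ v t x y z * pY Θ t x y z + v t x y z * pZ (pY Θ) t x y z)
            + (ε * pZ w t x y z * pZ Θ t x y z + ε * w t x y z * pZ (pZ Θ) t x y z))) z := by
      refine HasDerivAt.sub (HasDerivAt.add ?_ (hq.hdZ t x y z)) ?_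
      · exact (((hΘ.pX.pX.hdZ t x y z).add (hΘ.pY.pY.hdZ t x y z)).add
          (hΘ.pZ.pZ.hdZ t x y z)).const_mul _
      · have h3 : HasDerivAt (fun s => ε * w t x y s * pZ Θ t x y s)
            (ε * pZ w t x y z * pZ Θ t x y z + ε * w t x y z * pZ (pZ Θ) t x y z) z := by
          exact ((hw.hdZ t x y z).const_mul ε).mul (hΘ.pZ.hdZ t x y z)
        exact (((hu.hdZ t x y z).mul (hΘ.pX.hdZ t x y z)).add
          ((hv.hdZ t x y z).mul (hΘ.pY.hdZ t x y z))).add h3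
    have e1 : pZ (pX (pX Θ)) = pX (pX (pZ Θ)) :=
      (pZ_pX_comm hΘ.pX).trans (congrArg pX (pZ_pX_comm hΘ))
    have e2 : pZ (pY (pY Θ)) = pY (pY (pZ Θ)) :=
      (pZ_pY_comm hΘ.pY).trans (congrArg pY (pZ_pY_comm hΘ))
    calc pZ (pT Θ) t x y z = deriv (fun s => pT Θ t x y s) z := rfl
      _ = _ := by
          rw [hsl, hR.deriv, e1, e2, pZ_pX_comm hΘ, pZ_pY_comm hΘ]
          ring
    -- Step C : assembly
  have hhalf : ∀ r : ℝ, (1/2 : ℝ) * (2 * r) = r := fun r => by ring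
  rw [hhalf]
  have hdivz : ∀ x y z : ℝ, pX (pZ u) t x y z + pY (pZ v) t x y z
      + ε * pZ (pZ w) t x y z = 0 := by
    intro x y z
    have h0 : (fun s => pX u t x y s + pY v t x y s + ε * pZ w t x y s)
        = fun _ => (0:ℝ) := funext fun s => hdiv t ht x y s
    have hD := (((hu.pX.hdZ t x y z).add (hv.pY.hdZ t x y z)).add
      ((hw.pZ.hdZ t x y z).const_mul ε)).deriv
    change deriv (fun s => pX u t x y s + pY v t x y s + ε * pZ w t x y s) z = _ at hD
    rw [h0, deriv_const] at hD
    rw [pZ_pX_comm hu, pZ_pY_comm hv] at hD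
    linarith [hD]
  have hN : (∫ p in Omega L H, pZ Θ t p.1 p.2.1 p.2.2 * pT (pZ Θ) t p.1 p.2.1 p.2.2)
      = (∫ p in Omega L H, (σ * Re)⁻¹ * (pZ Θ t p.1 p.2.1 p.2.2 * pX (pX (pZ Θ)) t p.1 p.2.1 p.2.2) + (σ * Re)⁻¹ * (pZ Θ t p.1 p.2.1 p.2.2 * pY (pY (pZ Θ)) t p.1 p.2.1 p.2.2) + (σ * Re)⁻¹ * (pZ Θ t p.1 p.2.1 p.2.2 * pZ (pZ (pZ Θ)) t p.1 p.2.1 p.2.2) + (pZ Θ t p.1 p.2.1 p.2.2 * pZ q t p.1 p.2.1 p.2.2) - ((pX Θ t p.1 p.2.1 p.2.2 * pZ u t p.1 p.2.1 p.2.2) * pZ Θ t p.1 p.2.1 p.2.2 + (pY Θ t p.1 p.2.1 p.2.2 * pZ v t p.1 p.2.1 p.2.2) * pZ Θ t p.1 p.2.1 p.2.2 + ε * ((pZ Θ t p.1 p.2.1 p.2.2 * pZ w t p.1 p.2.1 p.2.2) * pZ Θ t p.1 p.2.1 p.2.2)) - ((u t p.1 p.2.1 p.2.2 * pZ Θ t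 p.1 p.2.1 p.2.2) * pX (pZ Θ) t p.1 p.2.1 p.2.2 + (v t p.1 p.2.1 p.2.2 * pZ Θ t p.1 p.2.1 p.2.2) * pY (pZ Θ) t p.1 p.2.1 p.2.2 + ε * ((w t p.1 p.2.1 p.2.2 * pZ Θ t p.1 p.2.1 p.2.2) * pZ (pZ Θ) t p.1 p.2.1 p.2.2))) :=
    Icongr fun p => by rw [hpt p.1 p.2.1 p.2.2]; ring
  have hsplit : (∫ p in Omega L H, (σ * Re)⁻¹ * (pZ Θ t p.1 p.2.1 p.2.2 * pX (pX (pZ Θ)) t p.1 p.2.1 p.2.2) + (σ * Re)⁻¹ * (pZ Θ t p.1 p.2.1 p.2.2 * pY (pY (pZ Θ)) t p.1 p.2.1 p.2.2) + (σ * Re)⁻¹ * (pZ Θ t p.1 p.2.1 p.2.2 * pZ (pZ (pZ Θ)) t p.1 p.2.1 p.2.2) + (pZ Θ t p.1 p.2.1 p.2.2 * pZ q t p.1 p.2.1 p.2.2) - ((pX Θ t p.1 p.2.1 p.2.2 * pZ u t p.1 p.2.1 p.2.2) * pZ Θ t p.1 p.2.1 p.2.2 + (pY Θ t p.1 p.2.1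 p.2.2 * pZ v t p.1 p.2.1 p.2.2) * pZ Θ t p.1 p.2.1 p.2.2 + ε * ((pZ Θ t p.1 p.2.1 p.2.2 * pZ w t p.1 p.2.1 p.2.2) * pZ Θ t p.1 p.2.1 p.2.2)) - ((u t p.1 p.2.1 p.2.2 * pZ Θ t p.1 p.2.1 p.2.2) * pX (pZ Θ) t p.1 p.2.1 p.2.2 + (v t p.1 p.2.1 p.2.2 * pZ Θ t p.1 p.2.1 p.2.2) * pY (pZ Θ) t p.1 p.2.1 p.2.2 + ε * ((w t p.1 p.2.1 p.2.2 * pZ Θ t p.1 p.2.1 p.2.2) * pZ (pZ Θ) t p.1 p.2.1 p.2.2)))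
      = (σ * Re)⁻¹ * (∫ p in Omega L H, (pZ Θ t p.1 p.2.1 p.2.2 * pX (pX (pZ Θ)) t p.1 p.2.1 p.2.2)) + (σ * Re)⁻¹ * (∫ p in Omega L H, (pZ Θ t p.1 p.2.1 p.2.2 * pY (pY (pZ Θ)) t p.1 p.2.1 p.2.2)) + (σ * Re)⁻¹ * (∫ p in Omega L H, (pZ Θ t p.1 p.2.1 p.2.2 * pZ (pZ (pZ Θ)) t p.1 p.2.1 p.2.2)) + (∫ p in Omega L H, (pZ Θ t p.1 p.2.1 p.2.2 * pZ q t p.1 p.2.1 p.2.2)) - (∫ p in Omega L H, (pX Θ t p.1 p.2.1 p.2.2 * pZ u t p.1 p.2.1 p.2.2) * pZ Θ t p.1 p.2.1 p.2.2 + (pY Θ t p.1 p.2.1 p.2.2 * pZ v t p.1 p.2.1 p.2.2) * pZ Θ t p.1 p.2.1 p.2.2 + ε * ((pZ Θ t p.1 p.2.1 p.2.2 * pZ w t p.1 p.2.1 p.2.2) * pZ Θ t p.1 p.2.1 p.2.2)) - (∫ p in Omega L H, (u t p.1 p.2.1 p.2.2 * pZ Θ t p.1 p.2.1 p.2.2)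 * pX (pZ Θ) t p.1 p.2.1 p.2.2 + (v t p.1 p.2.1 p.2.2 * pZ Θ t p.1 p.2.1 p.2.2) * pY (pZ Θ) t p.1 p.2.1 p.2.2 + ε * ((w t p.1 p.2.1 p.2.2 * pZ Θ t p.1 p.2.1 p.2.2) * pZ (pZ Θ) t p.1 p.2.1 p.2.2)) :=
    Isplit6 ((hΘ.pZ.contSlice t).mul (hΘ.pZ.pX.pX.contSlice t)) ((hΘ.pZ.contSlice t).mul (hΘ.pZ.pY.pY.contSlice t)) ((hΘ.pZ.contSlice t).mul (hΘ.pZ.pZ.pZ.contSlice t))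
      ((hΘ.pZ.contSlice t).mul (hq.pZ.contSlice t)) (((((hΘ.pX.contSlice t).mul (hu.pZ.contSlice t)).mul (hΘ.pZ.contSlice t)).add (((hΘ.pY.contSlice t).mul (hv.pZ.contSlice t)).mul (hΘ.pZ.contSlice t))).add (continuous_const.mul (((hΘ.pZ.contSlice t).mul (hw.pZ.contSlice t)).mul (hΘ.pZ.contSlice t)))) (((((hu.contSlice t).mul (hΘ.pZ.contSlice t)).mul (hΘ.pZ.pX.contSlice t)).add (((hv.contSlice t).mul (hΘ.pZ.contSlice t)).mul (hΘ.pZ.pY.contSlice t))).add (continuous_const.mul (((hw.contSlice t).mul (hΘ.pZ.contSlice t)).mul (hΘ.pZ.pZ.contSlice t))))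
  have hNs := hN.trans hsplit
  have hI1 : (∫ p in Omega L H, (pZ Θ t p.1 p.2.1 p.2.2 * pX (pX (pZ Θ)) t p.1 p.2.1 p.2.2)) = -(∫ p in Omega L H, pX (pZ Θ) t p.1 p.2.1 p.2.2 * pX (pZ Θ) t p.1 p.2.1 p.2.2) :=
    ibp_x_Omega hL.le hH.le hΘ.pZ hΘ.pZ.pX hΘp.pZ hΘp.pZ.pX t
  have hI2 : (∫ p in Omega L H, (pZ Θ t p.1 p.2.1 p.2.2 * pY (pY (pZ Θ)) t p.1 p.2.1 p.2.2)) = -(∫ p in Omega L H, pY (pZ Θ) t p.1 p.2.1 p.2.2 * pY (pZ Θ) t p.1 p.2.1 p.2.2) :=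
    ibp_y_Omega hL.le hH.le hΘ.pZ hΘ.pZ.pY hΘp.pZ hΘp.pZ.pY t
  have hI3 : (∫ p in Omega L H, (pZ Θ t p.1 p.2.1 p.2.2 * pZ (pZ (pZ Θ)) t p.1 p.2.1 p.2.2)) = -(∫ p in Omega L H, pZ (pZ Θ) t p.1 p.2.1 p.2.2 * pZ (pZ Θ) t p.1 p.2.1 p.2.2) :=
    ibp_z_Omega hL.le hH.le hΘ.pZ hΘ.pZ.pZ t
      (fun x y => ⟨by rw [(hbc t ht x y).2.1, zero_mul], by rw [(hbc t ht x y).1, zero_mul]⟩)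
  have hI4 : (∫ p in Omega L H, (pZ Θ t p.1 p.2.1 p.2.2 * pZ q t p.1 p.2.1 p.2.2)) = -(∫ p in Omega L H, pZ (pZ Θ) t p.1 p.2.1 p.2.2 * q t p.1 p.2.1 p.2.2) :=
    ibp_z_Omega hL.le hH.le hΘ.pZ hq t
      (fun x y => ⟨by rw [(hbc t ht x y).2.1, zero_mul], by rw [(hbc t ht x y).1, zero_mul]⟩)
  have hF5 : (∫ p in Omega L H, (pX Θ t p.1 p.2.1 p.2.2 * pZ u t p.1 p.2.1 p.2.2) * pZ Θ t p.1 p.2.1 p.2.2 + (pY Θ t p.1 p.2.1 p.2.2 * pZ v t p.1 p.2.1 p.2.2) * pZ Θ t p.1 p.2.1 p.2.2 + ε * ((pZ Θ t p.1 p.2.1 p.2.2 * pZ w t p.1 p.2.1 p.2.2) * pZ Θ t p.1 p.2.1 p.2.2)) = (∫ p in Omega L H, (pX Θ t p.1 p.2.1 p.2.2 * pZ u t p.1 p.2.1 p.2.2) * pZ Θ t p.1 p.2.1 p.2.2) + (∫ p in Omega L H, (pY Θ t p.1 p.2.1 p.2.2 * pZ v t p.1 p.2.1 p.2.2) * pZ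 Θ t p.1 p.2.1 p.2.2) + ε * (∫ p in Omega L H, (pZ Θ t p.1 p.2.1 p.2.2 * pZ w t p.1 p.2.1 p.2.2) * pZ Θ t p.1 p.2.1 p.2.2) := I3add (((hΘ.pX.contSlice t).mul (hu.pZ.contSlice t)).mul (hΘ.pZ.contSlice t)) (((hΘ.pY.contSlice t).mul (hv.pZ.contSlice t)).mul (hΘ.pZ.contSlice t)) (((hΘ.pZ.contSlice t).mul (hw.pZ.contSlice t)).mul (hΘ.pZ.contSlice t))
  have hF6 : (∫ p in Omega L H, (u t p.1 p.2.1 p.2.2 * pZ Θ t p.1 p.2.1 p.2.2) * pX (pZ Θ) t p.1 p.2.1 p.2.2 + (v t p.1 p.2.1 p.2.2 * pZ Θ t p.1 p.2.1 p.2.2) * pY (pZ Θ) t p.1 p.2.1 p.2.2 + ε * ((w t p.1 p.2.1 p.2.2 * pZ Θ t p.1 p.2.1 p.2.2) * pZ (pZ Θ) t p.1 p.2.1 p.2.2)) = (∫ p in Omega L H, (u t p.1 p.2.1 p.2.2 * pZ Θ t p.1 p.2.1 p.2.2) * pX (pZ Θ) t p.1 p.2.1 p.2.2) + (∫ p in Omega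 L H, (v t p.1 p.2.1 p.2.2 * pZ Θ t p.1 p.2.1 p.2.2) * pY (pZ Θ) t p.1 p.2.1 p.2.2) + ε * (∫ p in Omega L H, (w t p.1 p.2.1 p.2.2 * pZ Θ t p.1 p.2.1 p.2.2) * pZ (pZ Θ) t p.1 p.2.1 p.2.2) := I3add (((hu.contSlice t).mul (hΘ.pZ.contSlice t)).mul (hΘ.pZ.pX.contSlice t)) (((hv.contSlice t).mul (hΘ.pZ.contSlice t)).mul (hΘ.pZ.pY.contSlice t)) (((hw.contSlice t).mul (hΘ.pZ.contSlice t)).mul (hΘ.pZ.pZ.contSlice t))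
  -- advection terms vanish
  have hX1 : (∫ p in Omega L H, (u t p.1 p.2.1 p.2.2 * pZ Θ t p.1 p.2.1 p.2.2) * pX (pZ Θ) t p.1 p.2.1 p.2.2) = -(∫ p in Omega L H, pX (fun t x y z => u t x y z * pZ Θ t x y z) t p.1 p.2.1 p.2.2 * pZ Θ t p.1 p.2.1 p.2.2) :=
    ibp_x_Omega hL.le hH.le (hu.mul hΘ.pZ) hΘ.pZ (hup.mul hΘp.pZ) hΘp.pZ t
  have eX1 : (∫ p in Omega L H, pX (fun t x y z => u t x y z * pZ Θ t x y z) t p.1 p.2.1 p.2.2 * pZ Θ t p.1 p.2.1 p.2.2)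
      = (∫ p in Omega L H, pX u t p.1 p.2.1 p.2.2 * (pZ Θ t p.1 p.2.1 p.2.2 * pZ Θ t p.1 p.2.1 p.2.2) + (u t p.1 p.2.1 p.2.2 * pZ Θ t p.1 p.2.1 p.2.2) * pX (pZ Θ) t p.1 p.2.1 p.2.2) :=
    Icongr fun p => by rw [pX_mul hu hΘ.pZ]; ring
  have eX1' : (∫ p in Omega L H, pX u t p.1 p.2.1 p.2.2 * (pZ Θ t p.1 p.2.1 p.2.2 * pZ Θ t p.1 p.2.1 p.2.2) + (u t p.1 p.2.1 p.2.2 * pZ Θ t p.1 p.2.1 p.2.2) * pX (pZ Θ) t p.1 p.2.1 p.2.2) = (∫ p in Omega L H, pX u t p.1 p.2.1 p.2.2 * (pZ Θ t p.1 p.2.1 p.2.2 * pZ Θ t p.1 p.2.1 p.2.2)) + (∫ p in Omega L H, (u t p.1 p.2.1 p.2.2 * pZ Θ t p.1 p.2.1 p.2.2) * pX (pZ Θ) t p.1 p.2.1 p.2.2) := I2add ((hu.pX.contSlice t).mul ((hΘ.pZ.contSlice t).mul (hΘ.pZ.contSlice t))) (((hu.contSlice t).mul (hΘ.pZ.contSlice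 t)).mul (hΘ.pZ.pX.contSlice t))
  have hX1e : (∫ p in Omega L H, (u t p.1 p.2.1 p.2.2 * pZ Θ t p.1 p.2.1 p.2.2) * pX (pZ Θ) t p.1 p.2.1 p.2.2) = -((∫ p in Omega L H, pX u t p.1 p.2.1 p.2.2 * (pZ Θ t p.1 p.2.1 p.2.2 * pZ Θ t p.1 p.2.1 p.2.2)) + (∫ p in Omega L H, (u t p.1 p.2.1 p.2.2 * pZ Θ t p.1 p.2.1 p.2.2) * pX (pZ Θ) t p.1 p.2.1 p.2.2)) := by rw [eX1, eX1'] at hX1; exact hX1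
  have hX2 : (∫ p in Omega L H, (v t p.1 p.2.1 p.2.2 * pZ Θ t p.1 p.2.1 p.2.2) * pY (pZ Θ) t p.1 p.2.1 p.2.2) = -(∫ p in Omega L H, pY (fun t x y z => v t x y z * pZ Θ t x y z) t p.1 p.2.1 p.2.2 * pZ Θ t p.1 p.2.1 p.2.2) :=
    ibp_y_Omega hL.le hH.le (hv.mul hΘ.pZ) hΘ.pZ (hvp.mul hΘp.pZ) hΘp.pZ t
  have eX2 : (∫ p in Omega L H, pY (fun t x y z => v t x y z * pZ Θ t x y z) t p.1 p.2.1 p.2.2 * pZ Θ t p.1 p.2.1 p.2.2)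
      = (∫ p in Omega L H, pY v t p.1 p.2.1 p.2.2 * (pZ Θ t p.1 p.2.1 p.2.2 * pZ Θ t p.1 p.2.1 p.2.2) + (v t p.1 p.2.1 p.2.2 * pZ Θ t p.1 p.2.1 p.2.2) * pY (pZ Θ) t p.1 p.2.1 p.2.2) :=
    Icongr fun p => by rw [pY_mul hv hΘ.pZ]; ring
  have eX2' : (∫ p in Omega L H, pY v t p.1 p.2.1 p.2.2 * (pZ Θ t p.1 p.2.1 p.2.2 * pZ Θ t p.1 p.2.1 p.2.2) + (v t p.1 p.2.1 p.2.2 * pZ Θ t p.1 p.2.1 p.2.2) * pY (pZ Θ) t p.1 p.2.1 p.2.2) = (∫ p in Omega L H, pY v t p.1 p.2.1 p.2.2 * (pZ Θ t p.1 p.2.1 p.2.2 * pZ Θ t p.1 p.2.1 p.2.2)) + (∫ p in Omega L H, (v t p.1 p.2.1 p.2.2 * pZ Θ t p.1 p.2.1 p.2.2) * pY (pZ Θ) t p.1 p.2.1 p.2.2) := I2add ((hv.pY.contSlice t).mul ((hΘ.pZ.contSlice t).mul (hΘ.pZ.contSlice t))) (((hv.contSlice t).mul (hΘ.pZ.contSlice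 t)).mul (hΘ.pZ.pY.contSlice t))
  have hX2e : (∫ p in Omega L H, (v t p.1 p.2.1 p.2.2 * pZ Θ t p.1 p.2.1 p.2.2) * pY (pZ Θ) t p.1 p.2.1 p.2.2) = -((∫ p in Omega L H, pY v t p.1 p.2.1 p.2.2 * (pZ Θ t p.1 p.2.1 p.2.2 * pZ Θ t p.1 p.2.1 p.2.2)) + (∫ p in Omega L H, (v t p.1 p.2.1 p.2.2 * pZ Θ t p.1 p.2.1 p.2.2) * pY (pZ Θ) t p.1 p.2.1 p.2.2)) := by rw [eX2, eX2'] at hX2; exact hX2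
  have hX3 : (∫ p in Omega L H, (w t p.1 p.2.1 p.2.2 * pZ Θ t p.1 p.2.1 p.2.2) * pZ (pZ Θ) t p.1 p.2.1 p.2.2) = -(∫ p in Omega L H, pZ (fun t x y z => w t x y z * pZ Θ t x y z) t p.1 p.2.1 p.2.2 * pZ Θ t p.1 p.2.1 p.2.2) :=
    ibp_z_Omega hL.le hH.le (hw.mul hΘ.pZ) hΘ.pZ t
      (fun x y => ⟨by simp [(hbc t ht x y).2.2.2], by simp [(hbc t ht x y).2.2.1]⟩)
  have eX3 : (∫ p in Omega L H, pZ (fun t x y z => w t x y z * pZ Θ t x y z) t p.1 p.2.1 p.2.2 * pZ Θ t p.1 p.2.1 p.2.2)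
      = (∫ p in Omega L H, pZ w t p.1 p.2.1 p.2.2 * (pZ Θ t p.1 p.2.1 p.2.2 * pZ Θ t p.1 p.2.1 p.2.2) + (w t p.1 p.2.1 p.2.2 * pZ Θ t p.1 p.2.1 p.2.2) * pZ (pZ Θ) t p.1 p.2.1 p.2.2) :=
    Icongr fun p => by rw [pZ_mul hw hΘ.pZ]; ring
  have eX3' : (∫ p in Omega L H, pZ w t p.1 p.2.1 p.2.2 * (pZ Θ t p.1 p.2.1 p.2.2 * pZ Θ t p.1 p.2.1 p.2.2) + (w t p.1 p.2.1 p.2.2 * pZ Θ t p.1 p.2.1 p.2.2) * pZ (pZ Θ) t p.1 p.2.1 p.2.2) = (∫ p in Omega L H, pZ w t p.1 p.2.1 p.2.2 * (pZ Θ t p.1 p.2.1 p.2.2 * pZ Θ t p.1 p.2.1 p.2.2)) + (∫ p in Omega L H, (w t p.1 p.2.1 p.2.2 * pZ Θ t p.1 p.2.1 p.2.2) * pZ (pZ Θ) t p.1 p.2.1 p.2.2) := I2add ((hw.pZ.contSlice t).mul ((hΘ.pZ.contSlice t).mul (hΘ.pZ.contSlice t))) (((hw.contSlice t).mul (hΘ.pZ.contSlice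 t)).mul (hΘ.pZ.pZ.contSlice t))
  have hX3e : (∫ p in Omega L H, (w t p.1 p.2.1 p.2.2 * pZ Θ t p.1 p.2.1 p.2.2) * pZ (pZ Θ) t p.1 p.2.1 p.2.2) = -((∫ p in Omega L H, pZ w t p.1 p.2.1 p.2.2 * (pZ Θ t p.1 p.2.1 p.2.2 * pZ Θ t p.1 p.2.1 p.2.2)) + (∫ p in Omega L H, (w t p.1 p.2.1 p.2.2 * pZ Θ t p.1 p.2.1 p.2.2) * pZ (pZ Θ) t p.1 p.2.1 p.2.2)) := by rw [eX3, eX3'] at hX3; exact hX3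
  have ePs : (∫ p in Omega L H, pX u t p.1 p.2.1 p.2.2 * (pZ Θ t p.1 p.2.1 p.2.2 * pZ Θ t p.1 p.2.1 p.2.2) + pY v t p.1 p.2.1 p.2.2 * (pZ Θ t p.1 p.2.1 p.2.2 * pZ Θ t p.1 p.2.1 p.2.2) + ε * (pZ w t p.1 p.2.1 p.2.2 * (pZ Θ t p.1 p.2.1 p.2.2 * pZ Θ t p.1 p.2.1 p.2.2)))
      = (∫ p in Omega L H, pX u t p.1 p.2.1 p.2.2 * (pZ Θ t p.1 p.2.1 p.2.2 * pZ Θ t p.1 p.2.1 p.2.2)) + (∫ p in Omega L H, pY v t p.1 p.2.1 p.2.2 * (pZ Θ t p.1 p.2.1 p.2.2 * pZ Θ t p.1 p.2.1 p.2.2)) + ε * (∫ p in Omega L H, pZ w t p.1 p.2.1 p.2.2 * (pZ Θ t p.1 p.2.1 p.2.2 * pZ Θ t p.1 p.2.1 p.2.2)) := I3add ((hu.pX.contSlice t).mul ((hΘ.pZ.contSlice t).mul (hΘ.pZ.contSlice t))) ((hv.pY.contSlice t).mul ((hΘ.pZ.contSlice t).mul (hΘ.pZ.contSlice t))) ((hw.pZ.contSlice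 t).mul ((hΘ.pZ.contSlice t).mul (hΘ.pZ.contSlice t)))
  have eP0 : (∫ p in Omega L H, pX u t p.1 p.2.1 p.2.2 * (pZ Θ t p.1 p.2.1 p.2.2 * pZ Θ t p.1 p.2.1 p.2.2) + pY v t p.1 p.2.1 p.2.2 * (pZ Θ t p.1 p.2.1 p.2.2 * pZ Θ t p.1 p.2.1 p.2.2) + ε * (pZ w t p.1 p.2.1 p.2.2 * (pZ Θ t p.1 p.2.1 p.2.2 * pZ Θ t p.1 p.2.1 p.2.2))) = 0 :=
    Izero fun p => by
      linear_combination (pZ Θ t p.1 p.2.1 p.2.2 * pZ Θ t p.1 p.2.1 p.2.2) * hdiv t ht p.1 p.2.1 p.2.2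
  have hP : (∫ p in Omega L H, pX u t p.1 p.2.1 p.2.2 * (pZ Θ t p.1 p.2.1 p.2.2 * pZ Θ t p.1 p.2.1 p.2.2)) + (∫ p in Omega L H, pY v t p.1 p.2.1 p.2.2 * (pZ Θ t p.1 p.2.1 p.2.2 * pZ Θ t p.1 p.2.1 p.2.2)) + ε * (∫ p in Omega L H, pZ w t p.1 p.2.1 p.2.2 * (pZ Θ t p.1 p.2.1 p.2.2 * pZ Θ t p.1 p.2.1 p.2.2)) = 0 := ePs.symm.trans eP0
  -- the nonlinear claim
  have hC1 : (∫ p in Omega L H, (Θ t p.1 p.2.1 p.2.2 * pZ u t p.1 p.2.1 p.2.2) * pX (pZ Θ) t p.1 p.2.1 p.2.2) = -(∫ p in Omega L H, pX (fun t x y z => Θ t x y z * pZ u t x y z) t p.1 p.2.1 p.2.2 * pZ Θ t p.1 p.2.1 p.2.2) :=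
    ibp_x_Omega hL.le hH.le (hΘ.mul hu.pZ) hΘ.pZ (hΘp.mul hup.pZ) hΘp.pZ t
  have eC1 : (∫ p in Omega L H, pX (fun t x y z => Θ t x y z * pZ u t x y z) t p.1 p.2.1 p.2.2 * pZ Θ t p.1 p.2.1 p.2.2)
      = (∫ p in Omega L H, (pX Θ t p.1 p.2.1 p.2.2 * pZ u t p.1 p.2.1 p.2.2) * pZ Θ t p.1 p.2.1 p.2.2 + (Θ t p.1 p.2.1 p.2.2 * pX (pZ u) t p.1 p.2.1 p.2.2) * pZ Θ t p.1 p.2.1 p.2.2) :=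
    Icongr fun p => by rw [pX_mul hΘ hu.pZ]; ring
  have eC1' : (∫ p in Omega L H, (pX Θ t p.1 p.2.1 p.2.2 * pZ u t p.1 p.2.1 p.2.2) * pZ Θ t p.1 p.2.1 p.2.2 + (Θ t p.1 p.2.1 p.2.2 * pX (pZ u) t p.1 p.2.1 p.2.2) * pZ Θ t p.1 p.2.1 p.2.2) = (∫ p in Omega L H, (pX Θ t p.1 p.2.1 p.2.2 * pZ u t p.1 p.2.1 p.2.2) * pZ Θ t p.1 p.2.1 p.2.2) + (∫ p in Omega L H, (Θ t p.1 p.2.1 p.2.2 * pX (pZ u) t p.1 p.2.1 p.2.2) * pZ Θ t p.1 p.2.1 p.2.2) := I2add (((hΘ.pX.contSlice t).mul (hu.pZ.contSlice t)).mul (hΘ.pZ.contSlice t)) (((hΘ.contSlice t).mul (hu.pZ.pX.contSlice t)).mul (hΘ.pZ.contSlice t))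
  have hC1e : (∫ p in Omega L H, (Θ t p.1 p.2.1 p.2.2 * pZ u t p.1 p.2.1 p.2.2) * pX (pZ Θ) t p.1 p.2.1 p.2.2) = -((∫ p in Omega L H, (pX Θ t p.1 p.2.1 p.2.2 * pZ u t p.1 p.2.1 p.2.2) * pZ Θ t p.1 p.2.1 p.2.2) + (∫ p in Omega L H, (Θ t p.1 p.2.1 p.2.2 * pX (pZ u) t p.1 p.2.1 p.2.2) * pZ Θ t p.1 p.2.1 p.2.2)) := by rw [eC1, eC1'] at hC1; exact hC1
  have hC2 : (∫ p in Omega L H, (Θ t p.1 p.2.1 p.2.2 * pZ v t p.1 p.2.1 p.2.2) * pY (pZ Θ) t p.1 p.2.1 p.2.2) = -(∫ p in Omega L H, pY (fun t x y z => Θ t x y z * pZ v t x y z) t p.1 p.2.1 p.2.2 * pZ Θ t p.1 p.2.1 p.2.2) :=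
    ibp_y_Omega hL.le hH.le (hΘ.mul hv.pZ) hΘ.pZ (hΘp.mul hvp.pZ) hΘp.pZ t
  have eC2 : (∫ p in Omega L H, pY (fun t x y z => Θ t x y z * pZ v t x y z) t p.1 p.2.1 p.2.2 * pZ Θ t p.1 p.2.1 p.2.2)
      = (∫ p in Omega L H, (pY Θ t p.1 p.2.1 p.2.2 * pZ v t p.1 p.2.1 p.2.2) * pZ Θ t p.1 p.2.1 p.2.2 + (Θ t p.1 p.2.1 p.2.2 * pY (pZ v) t p.1 p.2.1 p.2.2) * pZ Θ t p.1 p.2.1 p.2.2) :=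
    Icongr fun p => by rw [pY_mul hΘ hv.pZ]; ring
  have eC2' : (∫ p in Omega L H, (pY Θ t p.1 p.2.1 p.2.2 * pZ v t p.1 p.2.1 p.2.2) * pZ Θ t p.1 p.2.1 p.2.2 + (Θ t p.1 p.2.1 p.2.2 * pY (pZ v) t p.1 p.2.1 p.2.2) * pZ Θ t p.1 p.2.1 p.2.2) = (∫ p in Omega L H, (pY Θ t p.1 p.2.1 p.2.2 * pZ v t p.1 p.2.1 p.2.2) * pZ Θ t p.1 p.2.1 p.2.2) + (∫ p in Omega L H, (Θ t p.1 p.2.1 p.2.2 * pY (pZ v) t p.1 p.2.1 p.2.2) * pZ Θ t p.1 p.2.1 p.2.2) := I2add (((hΘ.pY.contSlice t).mul (hv.pZ.contSlice t)).mul (hΘ.pZ.contSlice t)) (((hΘ.contSlice t).mul (hv.pZ.pY.contSlice t)).mul (hΘ.pZ.contSlice t))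
  have hC2e : (∫ p in Omega L H, (Θ t p.1 p.2.1 p.2.2 * pZ v t p.1 p.2.1 p.2.2) * pY (pZ Θ) t p.1 p.2.1 p.2.2) = -((∫ p in Omega L H, (pY Θ t p.1 p.2.1 p.2.2 * pZ v t p.1 p.2.1 p.2.2) * pZ Θ t p.1 p.2.1 p.2.2) + (∫ p in Omega L H, (Θ t p.1 p.2.1 p.2.2 * pY (pZ v) t p.1 p.2.1 p.2.2) * pZ Θ t p.1 p.2.1 p.2.2)) := by rw [eC2, eC2'] at hC2; exact hC2
  have hC3 : (∫ p in Omega L H, (Θ t p.1 p.2.1 p.2.2 * pZ w t p.1 p.2.1 p.2.2) * pZ (pZ Θ) t p.1 p.2.1 p.2.2) = -(∫ p in Omega L H, pZ (fun t x y z => Θ t x y z * pZ w t x y z) t p.1 p.2.1 p.2.2 * pZ Θ t p.1 p.2.1 p.2.2) :=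
    ibp_z_Omega hL.le hH.le (hΘ.mul hw.pZ) hΘ.pZ t
      (fun x y => ⟨by simp [(hbc t ht x y).2.1], by simp [(hbc t ht x y).1]⟩)
  have eC3 : (∫ p in Omega L H, pZ (fun t x y z => Θ t x y z * pZ w t x y z) t p.1 p.2.1 p.2.2 * pZ Θ t p.1 p.2.1 p.2.2)
      = (∫ p in Omega L H, (pZ Θ t p.1 p.2.1 p.2.2 * pZ w t p.1 p.2.1 p.2.2) * pZ Θ t p.1 p.2.1 p.2.2 + (Θ t p.1 p.2.1 p.2.2 * pZ (pZ w) t p.1 p.2.1 p.2.2) * pZ Θ t p.1 p.2.1 p.2.2) :=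
    Icongr fun p => by rw [pZ_mul hΘ hw.pZ]; ring
  have eC3' : (∫ p in Omega L H, (pZ Θ t p.1 p.2.1 p.2.2 * pZ w t p.1 p.2.1 p.2.2) * pZ Θ t p.1 p.2.1 p.2.2 + (Θ t p.1 p.2.1 p.2.2 * pZ (pZ w) t p.1 p.2.1 p.2.2) * pZ Θ t p.1 p.2.1 p.2.2) = (∫ p in Omega L H, (pZ Θ t p.1 p.2.1 p.2.2 * pZ w t p.1 p.2.1 p.2.2) * pZ Θ t p.1 p.2.1 p.2.2) + (∫ p in Omega L H, (Θ t p.1 p.2.1 p.2.2 * pZ (pZ w) t p.1 p.2.1 p.2.2) * pZ Θ t p.1 p.2.1 p.2.2) := I2add (((hΘ.pZ.contSlice t).mul (hw.pZ.contSlice t)).mul (hΘ.pZ.contSlice t)) (((hΘ.contSlice t).mul (hw.pZ.pZ.contSlice t)).mul (hΘ.pZ.contSlice t))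
  have hC3e : (∫ p in Omega L H, (Θ t p.1 p.2.1 p.2.2 * pZ w t p.1 p.2.1 p.2.2) * pZ (pZ Θ) t p.1 p.2.1 p.2.2) = -((∫ p in Omega L H, (pZ Θ t p.1 p.2.1 p.2.2 * pZ w t p.1 p.2.1 p.2.2) * pZ Θ t p.1 p.2.1 p.2.2) + (∫ p in Omega L H, (Θ t p.1 p.2.1 p.2.2 * pZ (pZ w) t p.1 p.2.1 p.2.2) * pZ Θ t p.1 p.2.1 p.2.2)) := by rw [eC3, eC3'] at hC3; exact hC3
  have eRs : (∫ p in Omega L H, (Θ t p.1 p.2.1 p.2.2 * pX (pZ u) t p.1 p.2.1 p.2.2) * pZ Θ t p.1 p.2.1 p.2.2 + (Θ t p.1 p.2.1 p.2.2 * pY (pZ v) t p.1 p.2.1 p.2.2) * pZ Θ t p.1 p.2.1 p.2.2 + ε * ((Θ t p.1 p.2.1 p.2.2 * pZ (pZ w) t p.1 p.2.1 p.2.2) * pZ Θ t p.1 p.2.1 p.2.2))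
      = (∫ p in Omega L H, (Θ t p.1 p.2.1 p.2.2 * pX (pZ u) t p.1 p.2.1 p.2.2) * pZ Θ t p.1 p.2.1 p.2.2) + (∫ p in Omega L H, (Θ t p.1 p.2.1 p.2.2 * pY (pZ v) t p.1 p.2.1 p.2.2) * pZ Θ t p.1 p.2.1 p.2.2) + ε * (∫ p in Omega L H, (Θ t p.1 p.2.1 p.2.2 * pZ (pZ w) t p.1 p.2.1 p.2.2) * pZ Θ t p.1 p.2.1 p.2.2) := I3add (((hΘ.contSlice t).mul (hu.pZ.pX.contSlice t)).mul (hΘ.pZ.contSlice t)) (((hΘ.contSlice t).mul (hv.pZ.pY.contSlice t)).mul (hΘ.pZ.contSlice t)) (((hΘ.contSlice t).mul (hw.pZ.pZ.contSlice t)).mul (hΘ.pZ.contSlice t))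
  have eR0 : (∫ p in Omega L H, (Θ t p.1 p.2.1 p.2.2 * pX (pZ u) t p.1 p.2.1 p.2.2) * pZ Θ t p.1 p.2.1 p.2.2 + (Θ t p.1 p.2.1 p.2.2 * pY (pZ v) t p.1 p.2.1 p.2.2) * pZ Θ t p.1 p.2.1 p.2.2 + ε * ((Θ t p.1 p.2.1 p.2.2 * pZ (pZ w) t p.1 p.2.1 p.2.2) * pZ Θ t p.1 p.2.1 p.2.2)) = 0 :=
    Izero fun p => by
      linear_combination (Θ t p.1 p.2.1 p.2.2 * pZ Θ t p.1 p.2.1 p.2.2) * hdivz p.1 p.2.1 p.2.2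
  have hR : (∫ p in Omega L H, (Θ t p.1 p.2.1 p.2.2 * pX (pZ u) t p.1 p.2.1 p.2.2) * pZ Θ t p.1 p.2.1 p.2.2) + (∫ p in Omega L H, (Θ t p.1 p.2.1 p.2.2 * pY (pZ v) t p.1 p.2.1 p.2.2) * pZ Θ t p.1 p.2.1 p.2.2) + ε * (∫ p in Omega L H, (Θ t p.1 p.2.1 p.2.2 * pZ (pZ w) t p.1 p.2.1 p.2.2) * pZ Θ t p.1 p.2.1 p.2.2) = 0 := eRs.symm.trans eR0
  -- match the target integrals
  have hTGTa : (∫ p in Omega L H, Θ t p.1 p.2.1 p.2.2 * (pZ u t p.1 p.2.1 p.2.2 * pX (pZ Θ) t p.1 p.2.1 p.2.2 + pZ v t p.1 p.2.1 p.2.2 * pY (pZ Θ) t p.1 p.2.1 p.2.2 + ε * pZ w t p.1 p.2.1 p.2.2 * pZ (pZ Θ) t p.1 p.2.1 p.2.2))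
      = (∫ p in Omega L H, (Θ t p.1 p.2.1 p.2.2 * pZ u t p.1 p.2.1 p.2.2) * pX (pZ Θ) t p.1 p.2.1 p.2.2 + (Θ t p.1 p.2.1 p.2.2 * pZ v t p.1 p.2.1 p.2.2) * pY (pZ Θ) t p.1 p.2.1 p.2.2 + ε * ((Θ t p.1 p.2.1 p.2.2 * pZ w t p.1 p.2.1 p.2.2) * pZ (pZ Θ) t p.1 p.2.1 p.2.2)) :=
    Icongr fun p => by ring
  have hTGTb : (∫ p in Omega L H, (Θ t p.1 p.2.1 p.2.2 * pZ u t p.1 p.2.1 p.2.2) * pX (pZ Θ) t p.1 p.2.1 p.2.2 + (Θ t p.1 p.2.1 p.2.2 * pZ v t p.1 p.2.1 p.2.2) * pY (pZ Θ) t p.1 p.2.1 p.2.2 + ε * ((Θ t p.1 p.2.1 p.2.2 * pZ w t p.1 p.2.1 p.2.2) * pZ (pZ Θ) t p.1 p.2.1 p.2.2))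
      = (∫ p in Omega L H, (Θ t p.1 p.2.1 p.2.2 * pZ u t p.1 p.2.1 p.2.2) * pX (pZ Θ) t p.1 p.2.1 p.2.2) + (∫ p in Omega L H, (Θ t p.1 p.2.1 p.2.2 * pZ v t p.1 p.2.1 p.2.2) * pY (pZ Θ) t p.1 p.2.1 p.2.2) + ε * (∫ p in Omega L H, (Θ t p.1 p.2.1 p.2.2 * pZ w t p.1 p.2.1 p.2.2) * pZ (pZ Θ) t p.1 p.2.1 p.2.2) := I3add (((hΘ.contSlice t).mul (hu.pZ.contSlice t)).mul (hΘ.pZ.pX.contSlice t)) (((hΘ.contSlice t).mul (hv.pZ.contSlice t)).mul (hΘ.pZ.pY.contSlice t)) (((hΘ.contSlice t).mul (hw.pZ.contSlice t)).mul (hΘ.pZ.pZ.contSlice t))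
  have hTGT := hTGTa.trans hTGTb
  have hSQa : (∫ p in Omega L H, (pX (pZ Θ) t p.1 p.2.1 p.2.2)^2 + (pY (pZ Θ) t p.1 p.2.1 p.2.2)^2 + (pZ (pZ Θ) t p.1 p.2.1 p.2.2)^2)
      = (∫ p in Omega L H, pX (pZ Θ) t p.1 p.2.1 p.2.2 * pX (pZ Θ) t p.1 p.2.1 p.2.2 + pY (pZ Θ) t p.1 p.2.1 p.2.2 * pY (pZ Θ) t p.1 p.2.1 p.2.2
          + (1:ℝ) * (pZ (pZ Θ) t p.1 p.2.1 p.2.2 * pZ (pZ Θ) t p.1 p.2.1 p.2.2)) :=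
    Icongr fun p => by ring
  have hSQb : (∫ p in Omega L H, pX (pZ Θ) t p.1 p.2.1 p.2.2 * pX (pZ Θ) t p.1 p.2.1 p.2.2 + pY (pZ Θ) t p.1 p.2.1 p.2.2 * pY (pZ Θ) t p.1 p.2.1 p.2.2
          + (1:ℝ) * (pZ (pZ Θ) t p.1 p.2.1 p.2.2 * pZ (pZ Θ) t p.1 p.2.1 p.2.2))
      = (∫ p in Omega L H, pX (pZ Θ) t p.1 p.2.1 p.2.2 * pX (pZ Θ) t p.1 p.2.1 p.2.2) + (∫ p in Omega L H, pY (pZ Θ) t p.1 p.2.1 p.2.2 * pY (pZ Θ) t p.1 p.2.1 p.2.2) + (1:ℝ) * (∫ p in Omega L H, pZ (pZ Θ) t p.1 p.2.1 p.2.2 * pZ (pZ Θ) t p.1 p.2.1 p.2.2) := I3add ((hΘ.pZ.pX.contSlice t).mul (hΘ.pZ.pX.contSlice t)) ((hΘ.pZ.pY.contSlice t).mul (hΘ.pZ.pY.contSlice t)) ((hΘ.pZ.pZ.contSlice t).mul (hΘ.pZ.pZ.contSlice t))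
  have hSQ := hSQa.trans hSQb
  rw [hNs, hI1, hI2, hI3, hI4, hF5, hF6, hTGT, hSQ, hC1e, hC2e, hC3e]
  linear_combination hR + (1/2) * hP - (1/2) * hX1e - (1/2) * hX2e - (ε/2) * hX3e
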